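/- Let m be a positive integer and let x be a real number with 0 < x < 2π. Then ∑_{n=1}^∞ cos(nx)/n^{2m-1} = ((-1)^{m-1} (2π)^{2m-2}/(2m-2)!) · ( ζ'(2-2m, 1 - x/(2π)) + ζ'(2-2m, x/(2π)) ). -/

import Mathlib

open Filter Topology Finset Real

/-- The Hurwitz zeta function `ζ(s, a)` for a real parameter `a > 0`: the meromorphic
continuation in `s` of the series `∑ k : ℕ, (k + a) ^ (-s)` (convergent for `Re s > 1`).
For `0 < a ≤ 1` it is Mathlib's `HurwitzZeta.hurwitzZeta`; for larger `a` it is obtained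
through the recurrence `ζ(s, a) = ζ(s, a + 1) + a ^ (-s)`. -/
noncomputable def hzeta (s : ℂ) (a : ℝ) : ℂ :=
  HurwitzZeta.hurwitzZeta (a : UnitAddCircle) s -
    ∑ j ∈ Finset.range (⌈a⌉₊ - 1), ((a : ℂ) - ((⌈a⌉₊ : ℂ) - 1) + j) ^ (-s)

/-! With `a = x / (2π)`, both sides equal `cosZeta a (2m - 1)`.

Since `a ∉ ℤ`, the partial sums of `cos (2π a n)` are bounded, so summation by parts makes the
Dirichlet series `∑ cos (2π a n) n^(-s)` converge on `0 < re s` to a holomorphic function. It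
agrees with `cosZeta a` on `1 < re s`, hence on all of `0 < re s` by the identity theorem; this
covers the conditionally convergent case `m = 1`.

On the other side `ζ(s, a) + ζ(s, 1 - a) = 2 ζ_even(a, s)`, and the functional equation writes
`ζ_even(a, 1 - u)` as `2 (2π)^(-u) Γ(u) cos (π u / 2) cosZeta a u`. At `u = 2m - 1` the cosine
vanishes, so only the term in which the cosine is differentiated survives. -/

open Complex HurwitzZeta

theorem sum_range_mul_eq_sum_partialSum_mul_sub_add {R : Type*} [CommRing R] (c f : ℕ → R)
    (N : ℕ) :
    ∑ n ∈ range N, c n * f n =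
      ∑ n ∈ range N, (∑ k ∈ range (n + 1), c k) * (f n - f (n + 1)) +
        (∑ k ∈ range N, c k) * f N := by
  induction N with
  | zero => simp
  | succ N ih => simp only [sum_range_succ, ih]; ring

theorem norm_natCast_add_one_cpow_neg_sub_le {s : ℂ} (hs : -1 ≤ s.re) (n : ℕ) :
    ‖((n : ℂ) + 1) ^ (-s) - ((n : ℂ) + 2) ^ (-s)‖ ≤
      ‖s‖ * ((n : ℝ) + 1) ^ (-s.re - 1) := by
  have hderiv : ∀ t ∈ Set.Icc ((n : ℝ) + 1) (n + 2),
      HasDerivWithinAt (fun t : ℝ => (t : ℂ) ^ (-s)) (-s * (t : ℂ) ^ (-s - 1))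
        (Set.Icc ((n : ℝ) + 1) (n + 2)) t := by
    intro t ht
    have ht0 : 0 < t := by linarith [ht.1]
    exact ((hasStrictDerivAt_cpow_const (ofReal_mem_slitPlane.mpr ht0)).hasDerivAt.comp_ofReal
      ).hasDerivWithinAt
  have hbound : ∀ t ∈ Set.Icc ((n : ℝ) + 1) (n + 2),
      ‖-s * (t : ℂ) ^ (-s - 1)‖ ≤ ‖s‖ * ((n : ℝ) + 1) ^ (-s.re - 1) := by
    intro t ht
    have ht0 : 0 < t := by linarith [ht.1]
    rw [norm_mul, norm_neg, norm_cpow_eq_rpow_re_of_pos ht0]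
    gcongr
    exact Real.rpow_le_rpow_of_nonpos (by positivity) ht.1 (by simp; linarith)
  have := (convex_Icc ((n : ℝ) + 1) (n + 2)).norm_image_sub_le_of_norm_hasDerivWithin_le
    hderiv hbound (Set.left_mem_Icc.mpr (by linarith)) (Set.right_mem_Icc.mpr (by linarith))
  rw [norm_sub_rev]
  push_cast at this
  norm_num at this
  exact this

theorem summable_natCast_add_one_rpow {p : ℝ} (hp : p < -1) :
    Summable fun n : ℕ => ((n : ℝ) + 1) ^ p := by
  have := (summable_nat_add_iff 1).mpr (Real.summable_nat_rpow.mpr hp)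
  simpa using this

section DirichletSeriesByParts

variable {c : ℕ → ℂ} {B : ℝ}

/-- The Dirichlet series `∑ c n (n + 1) ^ (-s)` after summation by parts. -/
noncomputable def dirichletSeriesByParts (c : ℕ → ℂ) (s : ℂ) : ℂ :=
  ∑' n, (∑ k ∈ range (n + 1), c k) * (((n : ℂ) + 1) ^ (-s) - ((n : ℂ) + 2) ^ (-s))

theorem norm_partialSum_mul_cpow_neg_sub_le (hc : ∀ N, ‖∑ n ∈ range N, c n‖ ≤ B)
    {s : ℂ} {σ R : ℝ} (hσ : -1 ≤ σ) (hσs : σ ≤ s.re) (hR : ‖s‖ ≤ R) (n : ℕ) :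
    ‖(∑ k ∈ range (n + 1), c k) * (((n : ℂ) + 1) ^ (-s) - ((n : ℂ) + 2) ^ (-s))‖ ≤
      B * (R * ((n : ℝ) + 1) ^ (-σ - 1)) := by
  rw [norm_mul]
  gcongr
  · exact (norm_nonneg _).trans (hc 0)
  · exact hc (n + 1)
  · calc _ ≤ ‖s‖ * ((n : ℝ) + 1) ^ (-s.re - 1) :=
          norm_natCast_add_one_cpow_neg_sub_le (hσ.trans hσs) n
      _ ≤ R * ((n : ℝ) + 1) ^ (-σ - 1) := by
          gcongr
          · exact (norm_nonneg s).trans hR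
          · simp

theorem tendsto_sum_mul_cpow_neg_dirichletSeriesByParts
    (hc : ∀ N, ‖∑ n ∈ range N, c n‖ ≤ B) {s : ℂ} (hs : 0 < s.re) :
    Tendsto (fun N => ∑ n ∈ range N, c n * ((n : ℂ) + 1) ^ (-s)) atTop
      (𝓝 (dirichletSeriesByParts c s)) := by
  have hsum : Summable fun n =>
      (∑ k ∈ range (n + 1), c k) * (((n : ℂ) + 1) ^ (-s) - ((n : ℂ) + 2) ^ (-s)) :=
    .of_norm_bounded (((summable_natCast_add_one_rpow (by linarith)).mul_left ‖s‖).mul_left B)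
      (norm_partialSum_mul_cpow_neg_sub_le hc (by linarith) le_rfl le_rfl)
  have hnorm (N : ℕ) : ‖((N : ℂ) + 1) ^ (-s)‖ = ((N : ℝ) + 1) ^ (-s.re) := by
    rw [show (N : ℂ) + 1 = ((N + 1 : ℝ) : ℂ) by push_cast; rfl,
      norm_cpow_eq_rpow_re_of_pos (by positivity), neg_re]
  have htail :
      Tendsto (fun N => (∑ k ∈ range N, c k) * ((N : ℂ) + 1) ^ (-s)) atTop (𝓝 0) := by
    refine squeeze_zero_norm (a := fun N : ℕ => B * ((N : ℝ) + 1) ^ (-s.re))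
      (fun N => by rw [norm_mul, hnorm]; gcongr; exact hc N) ?_
    rw [← mul_zero B]
    exact ((tendsto_rpow_neg_atTop hs).comp
      (tendsto_natCast_atTop_atTop.atTop_add tendsto_const_nhds)).const_mul B
  have := hsum.hasSum.tendsto_sum_nat.add htail
  rw [add_zero] at this
  refine this.congr fun N => ?_
  rw [sum_range_mul_eq_sum_partialSum_mul_sub_add c (fun n => ((n : ℂ) + 1) ^ (-s)) N]
  push_cast
  ring_nf

theorem differentiableOn_dirichletSeriesByParts (hc : ∀ N, ‖∑ n ∈ range N, c n‖ ≤ B) :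
    DifferentiableOn ℂ (dirichletSeriesByParts c) {s | 0 < s.re} := by
  intro s₀ (hs₀ : 0 < s₀.re)
  set U := {s : ℂ | s₀.re / 2 < s.re ∧ ‖s‖ < ‖s₀‖ + 1}
  have hU : IsOpen U :=
    (isOpen_lt continuous_const continuous_re).inter (isOpen_lt continuous_norm continuous_const)
  have hs₀U : s₀ ∈ U := ⟨by linarith, by linarith⟩
  have hterm (n : ℕ) : Differentiable ℂ fun s : ℂ =>
      (∑ k ∈ range (n + 1), c k) * (((n : ℂ) + 1) ^ (-s) - ((n : ℂ) + 2) ^ (-s)) :=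
    (differentiable_const _).mul ((differentiable_neg.const_cpow (Or.inl (by norm_cast))).sub
      (differentiable_neg.const_cpow (Or.inl (by norm_cast))))
  have hdiff : DifferentiableOn ℂ (dirichletSeriesByParts c) U :=
    differentiableOn_tsum_of_summable_norm
      (((summable_natCast_add_one_rpow (p := -(s₀.re / 2) - 1) (by linarith)).mul_left
        (‖s₀‖ + 1)).mul_left B)
      (fun n => (hterm n).differentiableOn) hU
      (fun n s hs => norm_partialSum_mul_cpow_neg_sub_le hc (by linarith) hs.1.le hs.2.le n)
  exact (hdiff.differentiableAt (hU.mem_nhds hs₀U)).differentiableWithinAt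

end DirichletSeriesByParts

theorem norm_sum_range_cos_le {x : ℝ} (hx : exp (x * I) ≠ 1) (N : ℕ) :
    ‖∑ n ∈ range N, (Real.cos ((n + 1) * x) : ℂ)‖ ≤ 2 / ‖1 - exp (x * I)‖ := by
  set z := exp (x * I)
  have hz : ‖z‖ = 1 := norm_exp_ofReal_mul_I x
  have hre : ∑ n ∈ range N, (Real.cos ((n + 1) * x) : ℂ) =
      ((∑ n ∈ range N, z ^ (n + 1)).re : ℂ) := by
    rw [re_sum, ofReal_sum]
    refine sum_congr rfl fun n _ => ?_
    rw [← Complex.exp_nat_mul, ← exp_ofReal_mul_I_re]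
    push_cast
    ring_nf
  have hgeom : ∑ n ∈ range N, z ^ (n + 1) = z * ((z ^ N - 1) / (z - 1)) := by
    rw [← geom_sum_eq hx, mul_sum]
    exact sum_congr rfl fun n _ => pow_succ' z n
  calc _ = |(∑ n ∈ range N, z ^ (n + 1)).re| := by rw [hre, norm_real, Real.norm_eq_abs]
    _ ≤ ‖∑ n ∈ range N, z ^ (n + 1)‖ := abs_re_le_norm _
    _ = ‖z ^ N - 1‖ / ‖1 - z‖ := by
      rw [hgeom, norm_mul, hz, one_mul, norm_div, norm_sub_rev z]
    _ ≤ 2 / ‖1 - z‖ := by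
      gcongr
      exact (norm_sub_le _ _).trans (by simp [hz]; norm_num)

theorem exp_two_pi_mul_I_ne_one {a : ℝ} (ha : (a : UnitAddCircle) ≠ 0) :
    exp ((2 * π * a : ℝ) * I) ≠ 1 := by
  intro h
  apply ha
  apply AddCircle.injective_toCircle one_ne_zero
  rw [AddCircle.toCircle_zero, AddCircle.toCircle_apply_mk]
  ext
  simpa [Circle.coe_exp] using h

theorem tendsto_sum_cos_mul_cpow_neg_of_one_lt_re (a : ℝ) {s : ℂ} (hs : 1 < s.re) :
    Tendsto (fun N => ∑ n ∈ range N,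
        (Real.cos ((n + 1) * (2 * π * a)) : ℂ) * ((n : ℂ) + 1) ^ (-s)) atTop
      (𝓝 (cosZeta a s)) := by
  have h := (hasSum_nat_add_iff' 1).mpr (hasSum_nat_cosZeta a hs)
  simp only [range_one, sum_singleton, Nat.cast_zero, mul_zero, Real.cos_zero,
    zero_cpow (ne_zero_of_one_lt_re hs), div_zero, sub_zero] at h
  refine h.tendsto_sum_nat.congr fun N => sum_congr rfl fun n _ => ?_
  rw [cpow_neg, div_eq_mul_inv]
  push_cast
  ring_nf

theorem tendsto_sum_cos_mul_cpow_neg_cosZeta {a : ℝ} (ha : (a : UnitAddCircle) ≠ 0) {s : ℂ}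
    (hs : 0 < s.re) :
    Tendsto (fun N => ∑ n ∈ range N,
        (Real.cos ((n + 1) * (2 * π * a)) : ℂ) * ((n : ℂ) + 1) ^ (-s)) atTop
      (𝓝 (cosZeta a s)) := by
  set c : ℕ → ℂ := fun n => Real.cos ((n + 1) * (2 * π * a))
  have hc := norm_sum_range_cos_le (exp_two_pi_mul_I_ne_one ha)
  have hU : IsOpen {s : ℂ | 0 < s.re} := isOpen_lt continuous_const continuous_re
  have heq : Set.EqOn (dirichletSeriesByParts c) (cosZeta a) {s | 0 < s.re} := by
    refine ((differentiableOn_dirichletSeriesByParts hc).analyticOnNhd hU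
      ).eqOn_of_preconnected_of_eventuallyEq
      ((differentiable_cosZeta_of_ne_zero ha).differentiableOn.analyticOnNhd hU)
      (convex_halfSpace_re_gt 0).isPreconnected (z₀ := 2) (by simp) ?_
    filter_upwards [(isOpen_lt continuous_const continuous_re).mem_nhds
      (show (1 : ℝ) < (2 : ℂ).re by simp)] with s hs
    exact tendsto_nhds_unique (tendsto_sum_mul_cpow_neg_dirichletSeriesByParts hc (by linarith))
      (tendsto_sum_cos_mul_cpow_neg_of_one_lt_re a hs)
  exact heq hs ▸ tendsto_sum_mul_cpow_neg_dirichletSeriesByParts hc hs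

theorem hasDerivAt_mul_mul_of_eq_zero {𝕜 : Type*} [NontriviallyNormedField 𝕜]
    {f g h : 𝕜 → 𝕜} {x g' : 𝕜} (hf : DifferentiableAt 𝕜 f x) (hg : HasDerivAt g g' x)
    (hh : DifferentiableAt 𝕜 h x) (hgx : g x = 0) :
    HasDerivAt (fun y => f y * g y * h y) (f x * g' * h x) x :=
  ((hf.hasDerivAt.mul hg).mul hh.hasDerivAt).congr_deriv (by rw [Pi.mul_apply, hgx]; ring)

theorem hurwitzZetaEven_eventuallyEq_one_sub (a : UnitAddCircle) {s₀ : ℂ} (hs₀ : s₀.re < 1)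
    (ha : a ≠ 0 ∨ s₀ ≠ 0) :
    hurwitzZetaEven a =ᶠ[𝓝 s₀] fun s =>
      2 * (2 * π) ^ (-(1 - s)) * Gamma (1 - s) * cos (π * (1 - s) / 2) * cosZeta a (1 - s) := by
  have hre : ∀ᶠ s in 𝓝 s₀, s.re < 1 :=
    (isOpen_lt continuous_re continuous_const).mem_nhds hs₀
  have hne : ∀ᶠ s in 𝓝 s₀, a ≠ 0 ∨ s ≠ 0 := by
    rcases ha with ha | hs
    · exact .of_forall fun _ => .inl ha
    · exact (eventually_ne_nhds hs).mono fun _ => .inr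
  filter_upwards [hre, hne] with s hs hs'
  have hpole (k : ℕ) : 1 - s ≠ -k := fun hk => by
    have := congrArg re hk
    simp only [sub_re, one_re, neg_re, natCast_re] at this
    linarith [k.cast_nonneg (α := ℝ)]
  simpa using hurwitzZetaEven_one_sub a hpole (hs'.imp_right fun h h' => h (by simpa using h'))

theorem hasDerivAt_hurwitzZetaEven_neg_two_mul_nat (a : UnitAddCircle) (n : ℕ)
    (ha : a ≠ 0 ∨ n ≠ 0) :
    HasDerivAt (hurwitzZetaEven a)
      ((-1) ^ n * (2 * n).factorial / (2 * (2 * π) ^ (2 * n)) * cosZeta a (2 * n + 1))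
      (-(2 * n)) := by
  set u₀ : ℂ := 2 * n + 1 with hu₀
  have hcos :
      HasDerivAt (fun u : ℂ => cos (π * u / 2)) (-sin (π * u₀ / 2) * (π / 2)) u₀ := by
    simpa using (((hasDerivAt_id u₀).const_mul (π : ℂ)).div_const 2).ccos
  have hcos₀ : cos (π * u₀ / 2) = 0 := cos_eq_zero_iff.mpr ⟨n, by push_cast [hu₀]; ring⟩
  have hsin₀ : sin (π * u₀ / 2) = (-1) ^ n := by
    rw [show (π : ℂ) * u₀ / 2 = ((n * π + π / 2 : ℝ) : ℂ) by push_cast [hu₀]; ring,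
      ← ofReal_sin, Real.sin_add_pi_div_two, Real.cos_nat_mul_pi]
    push_cast
    rfl
  have hGamma₀ : Gamma u₀ = (2 * n).factorial := by
    rw [hu₀, show (2 : ℂ) * n = ((2 * n : ℕ) : ℂ) by push_cast; rfl,
      Complex.Gamma_nat_eq_factorial]
  have hpow₀ : (2 * (π : ℂ)) ^ (-u₀) = ((2 * (π : ℂ)) ^ (2 * n + 1))⁻¹ := by
    rw [cpow_neg, hu₀, show (2 : ℂ) * n + 1 = ((2 * n + 1 : ℕ) : ℂ) by push_cast; rfl,
      cpow_natCast]
  have hF := hasDerivAt_mul_mul_of_eq_zero (f := fun u : ℂ => 2 * (2 * π) ^ (-u) * Gamma u)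
    (((differentiableAt_id.neg.const_cpow (.inl (by simp [pi_ne_zero]))).const_mul 2).mul
      (differentiableAt_Gamma u₀ fun k => by
        rw [hu₀]; exact_mod_cast (by omega : (2 * n + 1 : ℤ) ≠ -k)))
    hcos (differentiableAt_cosZeta a (ha.symm.imp_left fun hn h => hn (by simpa [hu₀] using h)))
    hcos₀
  have hnear := hurwitzZetaEven_eventuallyEq_one_sub a (s₀ := -(2 * n))
    (by simp; linarith [n.cast_nonneg (α := ℝ)]) (ha.imp_right (by simpa using ·))
  refine ((hF.comp_of_eq _ ((hasDerivAt_id _).const_sub 1) (by rw [hu₀]; simp; ring)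
    ).congr_of_eventuallyEq hnear).congr_deriv ?_
  rw [hsin₀, hGamma₀, hpow₀, pow_succ]
  field_simp

theorem tendsto_sum_cos_div_pow_cosZeta {a : ℝ} (ha : (a : UnitAddCircle) ≠ 0) {k : ℕ}
    (hk : k ≠ 0) :
    Tendsto (fun N => ∑ n ∈ range N,
        (Real.cos ((n + 1) * (2 * π * a)) : ℂ) / ((n : ℂ) + 1) ^ k) atTop
      (𝓝 (cosZeta a k)) := by
  refine (tendsto_sum_cos_mul_cpow_neg_cosZeta ha (s := k) (by simpa [Nat.pos_iff_ne_zero])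
    ).congr fun N => sum_congr rfl fun n _ => ?_
  rw [cpow_neg, cpow_natCast, div_eq_mul_inv]

theorem deriv_hurwitzZeta_neg_add_deriv_hurwitzZeta (a : UnitAddCircle) {s : ℂ} (hs : s ≠ 1) :
    deriv (hurwitzZeta (-a)) s + deriv (hurwitzZeta a) s = 2 * deriv (hurwitzZetaEven a) s := by
  have hsum : hurwitzZeta (-a) + hurwitzZeta a = fun s => 2 * hurwitzZetaEven a s := by
    ext s
    simp only [Pi.add_apply, hurwitzZetaEven_eq]
    ring
  rw [← deriv_add (differentiableAt_hurwitzZeta _ hs) (differentiableAt_hurwitzZeta _ hs)]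
  rw [hsum, deriv_const_mul _ (differentiableAt_hurwitzZetaEven a hs)]

theorem hzeta_eq_hurwitzZeta {a : ℝ} (ha0 : 0 < a) (ha1 : a ≤ 1) (s : ℂ) :
    hzeta s a = hurwitzZeta a s := by
  rw [hzeta, (Nat.ceil_eq_iff one_ne_zero).mpr ⟨by simpa using ha0, by simpa using ha1⟩]
  simp

theorem cos_series_odd_exponent_closed_form (m : ℕ) (hm : 0 < m)
    (x : ℝ) (hx0 : 0 < x) (hx1 : x < 2 * π) :
    Filter.Tendsto
      (fun N : ℕ => ∑ n ∈ Finset.range N,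
        (Real.cos ((n + 1) * x) : ℂ) / ((n : ℂ) + 1) ^ (2 * m - 1))
      Filter.atTop
      (𝓝 ((-1) ^ (m - 1) * (2 * (π : ℂ)) ^ (2 * m - 2) / (Nat.factorial (2 * m - 2) : ℂ) *
        (deriv (fun s => hzeta s (1 - x / (2 * π))) (2 - 2 * (m : ℂ)) +
          deriv (fun s => hzeta s (x / (2 * π))) (2 - 2 * (m : ℂ))))) := by
  obtain ⟨n, rfl⟩ := Nat.exists_eq_add_of_le' hm
  set a := x / (2 * π)
  have ha0 : 0 < a := by positivity
  have ha1 : a < 1 := (div_lt_one (by positivity)).mpr hx1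
  have ha : (a : UnitAddCircle) ≠ 0 := by
    rw [Ne, AddCircle.coe_eq_zero_iff_of_mem_Ico ⟨ha0.le, ha1⟩]
    exact ha0.ne'
  have hcoe : ((1 - a : ℝ) : UnitAddCircle) = -a := by
    rw [sub_eq_neg_add, AddCircle.coe_add_period, AddCircle.coe_neg]
  have hs : 2 - 2 * ((n + 1 : ℕ) : ℂ) = -(2 * n) := by push_cast; ring
  simp only [hzeta_eq_hurwitzZeta ha0 ha1.le, hzeta_eq_hurwitzZeta (sub_pos.mpr ha1) (by linarith),
    hcoe, hs]
  rw [deriv_hurwitzZeta_neg_add_deriv_hurwitzZeta _ (by rw [ne_eq, neg_eq_iff_eq_neg]; norm_cast),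
    (hasDerivAt_hurwitzZetaEven_neg_two_mul_nat a n (.inl ha)).deriv]
  have hx : 2 * π * a = x := by simp only [a]; field_simp
  have hseries := tendsto_sum_cos_div_pow_cosZeta ha (k := 2 * n + 1) (by omega)
  rw [hx] at hseries
  rw [show 2 * (n + 1) - 1 = 2 * n + 1 by omega, show 2 * (n + 1) - 2 = 2 * n by omega,
    Nat.add_sub_cancel]
  convert hseries using 2
  push_cast
  field_simp
  simp [← pow_mul, pow_mul', Nat.factorial_ne_zero]
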